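/- Let α ≥ 1, let R = R_1 ∪ ⋯ ∪ R_k, let s ∈ V be a source vertex, and suppose H' is a subgraph of G satisfying d_{H'}(u,v) ≤ α·d_G(u,v) for all u,v ∈ R (a subsetwise R × R α-spanner of G with respect to the shortest-path metric). Then there exists a spanning subgraph H of G whose number of edges is at most 2n plus the number of edges of H', such that σ_H(s,t) ≤ (α+1)·σ_G(s,t) for every vertex t ∈ V, i.e., a single-source group Steiner spanner with source s and stretch α+1. -/

import Mathlib

open SimpleGraph ENNReal

/-- The length (total weight) of a walk: the sum of its edge weights, with multiplicity. -/
def walkWeight {V : Type*} {G : SimpleGraph V} (w : V → V → ℝ) {u v : V} (p : G.Walk u v) : ℝ :=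
  (p.darts.map (fun d => w d.toProd.1 d.toProd.2)).sum

/-- A walk is a group Steiner path w.r.t. the groups `R` if it visits at least one
vertex of every group. -/
def IsGroupSteiner {V : Type*} {G : SimpleGraph V} {k : ℕ} (R : Fin k → Set V) {u v : V}
    (p : G.Walk u v) : Prop :=
  ∀ i, ∃ x ∈ R i, x ∈ p.support

/-- The group Steiner distance: the infimum of the lengths of group Steiner paths
from `s` to `t` (`∞` if there is none). -/
noncomputable def gsDist {V : Type*} (G : SimpleGraph V) (w : V → V → ℝ) {k : ℕ}
    (R : Fin k → Set V) (s t : V) : ℝ≥0∞ :=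
  ⨅ p : {p : G.Walk s t // IsGroupSteiner R p}, ENNReal.ofReal (walkWeight w p.1)

/-- The ordinary shortest-path distance: the infimum of the lengths of walks
from `s` to `t` (`∞` if there is none). -/
noncomputable def spDist {V : Type*} (G : SimpleGraph V) (w : V → V → ℝ) (s t : V) : ℝ≥0∞ :=
  ⨅ p : G.Walk s t, ENNReal.ofReal (walkWeight w p)

/-! Take `H = H' ⊔ T ⊔ F`, where `T` is a shortest-path tree from `s` and `F` a shortest-path
forest rooted at `R`; each has at most `n` edges. Split an optimal group Steiner walk from `s` to
`t` at its first and last `R`-vertices `a`, `b` into pieces of lengths `D₁`, `M`, `D₂`. In `H`, go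
from `s` to `a` along `T` (at most `D₁`), then from `a` to `b` through `H'`, hopping between the
consecutive `R`-vertices of the walk (at most `α M`). From `b` either go through `H'` to the root
`c` of `t` in `F`, which satisfies `d(b, c) ≤ 2 D₂`, and down `F` to `t` (at most `(2α + 1) D₂`),
or go back to `s` along `T` and then along `T` to `t` (at most `2 (D₁ + M) + D₂`). The first
route has stretch `α + 1` when `α D₂ ≤ α D₁ + M`, the second one otherwise. -/

namespace SimpleGraph.Walk

variable {V : Type*} {G G' : SimpleGraph V} {w : V → V → ℝ}

@[simp] lemma walkWeight_nil {u : V} : walkWeight w (nil : G.Walk u u) = 0 := rfl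

@[simp] lemma walkWeight_cons {u v x : V} (h : G.Adj u v) (p : G.Walk v x) :
    walkWeight w (cons h p) = w u v + walkWeight w p := by
  simp [walkWeight]

@[simp] lemma walkWeight_append {u v x : V} (p : G.Walk u v) (q : G.Walk v x) :
    walkWeight w (p.append q) = walkWeight w p + walkWeight w q := by
  simp [walkWeight, darts_append]

@[simp] lemma walkWeight_concat {u v x : V} (p : G.Walk u v) (h : G.Adj v x) :
    walkWeight w (p.concat h) = walkWeight w p + w v x := by
  simp [concat_eq_append]

@[simp] lemma walkWeight_mapLe (h : G ≤ G') {u v : V} (p : G.Walk u v) :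
    walkWeight w (p.mapLe h) = walkWeight w p := by
  induction p <;> simp [*]

lemma walkWeight_reverse (hsymm : ∀ u v, w u v = w v u) {u v : V} (p : G.Walk u v) :
    walkWeight w p.reverse = walkWeight w p := by
  induction p with
  | nil => rfl
  | cons h p ih => simp [ih, hsymm, add_comm]

lemma walkWeight_nonneg (hw : ∀ u v, 0 ≤ w u v) {u v : V} (p : G.Walk u v) :
    0 ≤ walkWeight w p :=
  List.sum_nonneg (by simp [hw])

lemma walkWeight_bypass_le [DecidableEq V] (hw : ∀ u v, 0 ≤ w u v) {u v : V} (p : G.Walk u v) :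
    walkWeight w p.bypass ≤ walkWeight w p :=
  (p.darts_bypass_sublist_darts.map _).sum_le_sum (by simp [hw])

end SimpleGraph.Walk

section ShortestWalks

open Walk

variable {V : Type*} {G : SimpleGraph V} {w : V → V → ℝ}

/-- Breaking weight ties by length makes the key drop strictly along the last edge of a walk,
even when that edge has weight `0`. -/
def walkKey (w : V → V → ℝ) {u v : V} (p : G.Walk u v) : ℝ ×ₗ ℕ :=
  toLex (walkWeight w p, p.length)

lemma walkWeight_le_of_walkKey_le {u v u' v' : V} {p : G.Walk u v} {q : G.Walk u' v'}
    (h : walkKey w p ≤ walkKey w q) : walkWeight w p ≤ walkWeight w q :=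
  Prod.Lex.monotone_fst _ _ h

lemma exists_walkKey_le [Finite V] (hw : ∀ u v, 0 ≤ w u v) {S : Set V} {r v : V} (hr : r ∈ S)
    (p : G.Walk r v) :
    ∃ c ∈ S, ∃ q : G.Walk c v, ∀ r' ∈ S, ∀ p' : G.Walk r' v,
      walkKey w q ≤ walkKey w p' := by
  classical
  have := Fintype.ofFinite V
  have : Nonempty (Σ c : S, G.Path c v) := ⟨⟨⟨r, hr⟩, p.toPath⟩⟩
  obtain ⟨⟨⟨c, hc⟩, q⟩, hq⟩ :=
    Finite.exists_min fun x : Σ c : S, G.Path c v => walkKey w x.2.1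
  refine ⟨c, hc, q.1, fun r' hr' p' => (hq ⟨⟨r', hr'⟩, p'.toPath⟩).trans ?_⟩
  exact Prod.Lex.toLex_mono ⟨walkWeight_bypass_le hw p', p'.length_bypass_le_length⟩

lemma exists_walkWeight_le [Finite V] (hw : ∀ u v, 0 ≤ w u v) {u v : V} (p : G.Walk u v) :
    ∃ q : G.Walk u v, ∀ p' : G.Walk u v, walkWeight w q ≤ walkWeight w p' := by
  obtain ⟨c, rfl, q, hq⟩ := exists_walkKey_le (S := {u}) hw rfl p
  exact ⟨q, fun p' => walkWeight_le_of_walkKey_le (hq c rfl p')⟩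

lemma exists_concat_walkKey_lt (hw : ∀ u v, 0 ≤ w u v) {c v : V} (q : G.Walk c v)
    (hcv : c ≠ v) :
    ∃ u, ∃ p : G.Walk c u, ∃ h : G.Adj u v, p.concat h = q ∧ walkKey w p < walkKey w q := by
  have hq : ¬ q.Nil := not_nil_of_ne hcv
  refine ⟨_, q.dropLast, q.adj_penultimate hq, concat_dropLast _, ?_⟩
  have key_lt : walkKey w q.dropLast < walkKey w (q.dropLast.concat (q.adj_penultimate hq)) :=
    Prod.Lex.toLex_strictMono (Prod.mk_lt_mk_of_le_of_lt
      (by rw [walkWeight_concat]; linarith [hw q.penultimate v]) (by rw [length_concat]; omega))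
  rwa [concat_dropLast] at key_lt

end ShortestWalks

lemma Set.ncard_range_le {α β : Type*} [Finite α] (f : α → β) :
    (Set.range f).ncard ≤ Nat.card α := by
  rw [← Set.image_univ, ← Set.ncard_univ]
  exact Set.ncard_image_le Set.finite_univ

section ShortestPathForest

open Walk

variable {V : Type*} {G : SimpleGraph V} {w : V → V → ℝ}

lemma exists_walkKey_le_fun [Finite V] (hw : ∀ u v, 0 ≤ w u v) (S : Set V) :
    ∃ (root : V → V) (best : ∀ v, G.Walk (root v) v), ∀ r ∈ S, ∀ v (p : G.Walk r v),
      root v ∈ S ∧ walkKey w (best v) ≤ walkKey w p := by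
  have h : ∀ v, ∃ c, ∃ q : G.Walk c v, ∀ r ∈ S, ∀ p : G.Walk r v,
      c ∈ S ∧ walkKey w q ≤ walkKey w p := by
    intro v
    by_cases hv : ∃ r ∈ S, Nonempty (G.Walk r v)
    · obtain ⟨r, hr, ⟨p⟩⟩ := hv
      obtain ⟨c, hc, q, hq⟩ := exists_walkKey_le hw hr p
      exact ⟨c, q, fun r hr p => ⟨hc, hq r hr p⟩⟩
    · exact ⟨v, nil, fun r hr p => (hv ⟨r, hr, ⟨p⟩⟩).elim⟩
  choose root best hbest using h
  exact ⟨root, best, fun r hr v p => hbest v r hr p⟩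

/-- The parent of `v` is the penultimate vertex of `best v`. -/
lemma exists_parent (hw : ∀ u v, 0 ≤ w u v) {S : Set V} {root : V → V}
    {best : ∀ v, G.Walk (root v) v}
    (hbest : ∀ r ∈ S, ∀ v (p : G.Walk r v), root v ∈ S ∧ walkKey w (best v) ≤ walkKey w p)
    (v : V) :
    ∃ u, ∀ r ∈ S, ∀ _ : G.Walk r v, v ∉ S → G.Adj u v ∧
      walkKey w (best u) < walkKey w (best v) ∧
      walkWeight w (best u) + w u v ≤ walkWeight w (best v) := by
  by_cases hv : v ∉ S ∧ ∃ r ∈ S, Nonempty (G.Walk r v)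
  · obtain ⟨hvS, r, hr, ⟨p⟩⟩ := hv
    have hroot := (hbest r hr v p).1
    obtain ⟨u, pre, h, hcat, hlt⟩ :=
      exists_concat_walkKey_lt hw (best v) (ne_of_mem_of_not_mem hroot hvS)
    have hu := (hbest _ hroot u pre).2
    refine ⟨u, fun _ _ _ _ => ⟨h, hu.trans_lt hlt, ?_⟩⟩
    rw [← hcat, walkWeight_concat]
    linarith [walkWeight_le_of_walkKey_le hu]
  · exact ⟨v, fun r hr p hvS => (hv ⟨hvS, r, hr, ⟨p⟩⟩).elim⟩

theorem exists_shortestPathForest [Finite V] (hw : ∀ u v, 0 ≤ w u v) (S : Set V) :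
    ∃ F ≤ G, F.edgeSet.ncard ≤ Nat.card V ∧ ∀ r ∈ S, ∀ v (p : G.Walk r v),
      ∃ c ∈ S, ∃ q : F.Walk c v, walkWeight w q ≤ walkWeight w p := by
  classical
  obtain ⟨root, best, hbest⟩ := exists_walkKey_le_fun (G := G) hw S
  choose par hpar using exists_parent hw hbest
  let F := G ⊓ fromEdgeSet (Set.range fun v => s(par v, v))
  have hF : ∀ v, ∀ r ∈ S, ∀ _ : G.Walk r v,
      ∃ c ∈ S, ∃ q : F.Walk c v, walkWeight w q ≤ walkWeight w (best v) := by
    have wf : WellFounded fun u v => walkKey w (best u) < walkKey w (best v) :=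
      Set.wellFoundedOn_range.mp (Set.finite_range _).wellFoundedOn
    intro v
    induction v using wf.induction with
    | _ v ih =>
    intro r hr p
    by_cases hvS : v ∈ S
    · exact ⟨v, hvS, nil, walkWeight_nonneg hw _⟩
    obtain ⟨hadj, hlt, hle⟩ := hpar v r hr p hvS
    obtain ⟨c, hc, q, hq⟩ := ih _ hlt r hr (p.concat hadj.symm)
    refine ⟨c, hc, q.concat ⟨hadj, ⟨v, rfl⟩, hadj.ne⟩, ?_⟩
    rw [walkWeight_concat]
    linarith
  refine ⟨F, inf_le_left, ?_, fun r hr v p => ?_⟩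
  · refine (Set.ncard_le_ncard ?_ (Set.finite_range _)).trans
      (Set.ncard_range_le fun v => s(par v, v))
    rw [edgeSet_inf, edgeSet_fromEdgeSet]
    exact Set.inter_subset_right.trans Set.sdiff_subset
  · obtain ⟨c, hc, q, hq⟩ := hF v r hr p
    exact ⟨c, hc, q, hq.trans (walkWeight_le_of_walkKey_le (hbest r hr v p).2)⟩

end ShortestPathForest

section Spanner

open Walk

variable {V : Type*} {G H : SimpleGraph V} {w : V → V → ℝ}

lemma exists_walkWeight_le_mul_of_spDist_le [Finite V] (hw : ∀ u v, 0 ≤ w u v) {α : ℝ}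
    (hα : 0 ≤ α) {u v : V} (h : spDist H w u v ≤ ENNReal.ofReal α * spDist G w u v)
    (r : G.Walk u v) : ∃ q : H.Walk u v, walkWeight w q ≤ α * walkWeight w r := by
  have hr : spDist H w u v ≤ ENNReal.ofReal (α * walkWeight w r) := by
    rw [ENNReal.ofReal_mul hα]
    exact h.trans (mul_le_mul_right (iInf_le _ r) _)
  obtain ⟨q₀⟩ : Nonempty (H.Walk u v) := by
    by_contra hne
    rw [not_nonempty_iff] at hne
    rw [spDist, iInf_of_empty] at hr
    exact ENNReal.ofReal_ne_top (top_le_iff.mp hr)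
  obtain ⟨q, hq⟩ := exists_walkWeight_le hw q₀
  refine ⟨q, (ENNReal.ofReal_le_ofReal_iff (mul_nonneg hα (walkWeight_nonneg hw r))).mp ?_⟩
  exact (le_iInf fun p => ENNReal.ofReal_le_ofReal (hq p)).trans hr

/-- Spanner paths between consecutive `U`-vertices of a walk `r.append p` from `a ∈ U` to
`b ∈ U`, concatenated. -/
lemma exists_walk_mem_support_of_spanner {U : Set V} {α : ℝ}
    (hsp : ∀ u ∈ U, ∀ v ∈ U, ∀ r : G.Walk u v,
      ∃ q : H.Walk u v, walkWeight w q ≤ α * walkWeight w r)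
    {x b : V} (p : G.Walk x b) (hb : b ∈ U) {a : V} (ha : a ∈ U) (r : G.Walk a x) :
    ∃ q : H.Walk a b, walkWeight w q ≤ α * (walkWeight w r + walkWeight w p) ∧
      ∀ y ∈ p.support, y ∈ U → y ∈ q.support := by
  induction p generalizing a with
  | nil =>
    obtain ⟨q, hq⟩ := hsp a ha _ hb r
    exact ⟨q, by simpa using hq, by simp⟩
  | @cons x x' b h p ih =>
    by_cases hx : x ∈ U
    · obtain ⟨q₁, hq₁⟩ := hsp a ha x hx r
      obtain ⟨q₂, hq₂, hsupp⟩ := ih hb hx (cons h nil)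
      refine ⟨q₁.append q₂, ?_, ?_⟩
      · simp only [walkWeight_append, walkWeight_cons, walkWeight_nil] at hq₂ ⊢
        linarith
      · intro y hy hyU
        rw [support_cons, List.mem_cons] at hy
        rcases hy with rfl | hy
        · simp
        · exact (mem_support_append_iff _ _).mpr (.inr (hsupp y hy hyU))
    · obtain ⟨q, hq, hsupp⟩ := ih hb ha (r.concat h)
      refine ⟨q, by simpa [add_assoc] using hq, ?_⟩
      intro y hy hyU
      rw [support_cons, List.mem_cons] at hy
      rcases hy with rfl | hy
      · exact (hx hyU).elim
      · exact hsupp y hy hyU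

end Spanner

namespace SimpleGraph.Walk

variable {V : Type*} {G : SimpleGraph V}

lemma exists_eq_append_append (U : Set V) {x t : V} (p : G.Walk x t)
    (hU : ∃ y ∈ p.support, y ∈ U) :
    ∃ a ∈ U, ∃ b ∈ U, ∃ (p₁ : G.Walk x a) (p₂ : G.Walk a b) (p₃ : G.Walk b t),
      p = p₁.append (p₂.append p₃) ∧
        ∀ y ∈ p.support, y ∈ U → y ∈ p₂.support := by
  induction p with
  | nil =>
    obtain ⟨y, hy, hyU⟩ := hU
    rw [support_nil, List.mem_singleton] at hy
    subst hy
    exact ⟨y, hyU, y, hyU, nil, nil, nil, rfl, fun z hz _ => hz⟩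
  | @cons x x' t h p ih =>
    by_cases hx : x ∈ U
    · by_cases hpU : ∃ y ∈ p.support, y ∈ U
      · obtain ⟨a, -, b, hb, p₁, p₂, p₃, rfl, hsupp⟩ := ih hpU
        refine ⟨x, hx, b, hb, nil, cons h (p₁.append p₂), p₃, by simp [append_assoc], ?_⟩
        intro y hy hyU
        rw [support_cons, List.mem_cons] at hy
        rcases hy with rfl | hy
        · simp
        · simp [hsupp y hy hyU]
      · refine ⟨x, hx, x, hx, nil, nil, cons h p, rfl, fun y hy hyU => ?_⟩
        rw [support_cons, List.mem_cons] at hy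
        rcases hy with rfl | hy
        · simp
        · exact (hpU ⟨y, hy, hyU⟩).elim
    · have hpU : ∃ y ∈ p.support, y ∈ U := by
        obtain ⟨y, hy, hyU⟩ := hU
        rw [support_cons, List.mem_cons] at hy
        rcases hy with rfl | hy
        · exact (hx hyU).elim
        · exact ⟨y, hy, hyU⟩
      obtain ⟨a, ha, b, hb, p₁, p₂, p₃, rfl, hsupp⟩ := ih hpU
      refine ⟨a, ha, b, hb, cons h p₁, p₂, p₃, rfl, fun y hy hyU => ?_⟩
      rw [support_cons, List.mem_cons] at hy
      rcases hy with rfl | hy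
      · exact (hx hyU).elim
      · exact hsupp y hy hyU

end SimpleGraph.Walk

section GroupSteiner

open Walk

variable {V : Type*} {G H : SimpleGraph V} {w : V → V → ℝ} {k : ℕ} {R : Fin k → Set V}

lemma IsGroupSteiner.of_forall_mem_support {u v u' v' : V} {p : G.Walk u v} {q : H.Walk u' v'}
    (hp : IsGroupSteiner R p) (h : ∀ y ∈ p.support, y ∈ ⋃ i, R i → y ∈ q.support) :
    IsGroupSteiner R q := fun i =>
  let ⟨x, hx, hxp⟩ := hp i
  ⟨x, hx, h x hxp (Set.mem_iUnion.mpr ⟨i, hx⟩)⟩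

lemma gsDist_le_mul_of_forall {s t : V} {c : ℝ} (hc : 0 < c)
    (h : ∀ p : G.Walk s t, IsGroupSteiner R p →
      ∃ q : H.Walk s t, IsGroupSteiner R q ∧ walkWeight w q ≤ c * walkWeight w p) :
    gsDist H w R s t ≤ ENNReal.ofReal c * gsDist G w R s t := by
  rw [gsDist, gsDist, ENNReal.mul_iInf_of_ne (by simpa using hc) ofReal_ne_top]
  refine le_iInf fun ⟨p, hp⟩ => ?_
  obtain ⟨q, hq, hle⟩ := h p hp
  rw [← ENNReal.ofReal_mul hc.le]
  exact iInf_le_of_le ⟨q, hq⟩ (ENNReal.ofReal_le_ofReal hle)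

end GroupSteiner

section StretchBound

open Walk

variable {V : Type*} {G H' T F : SimpleGraph V} {w : V → V → ℝ} {U : Set V} {α : ℝ} {s : V}

lemma exists_walk_via_spanner_forest (hsymm : ∀ u v, w u v = w v u) (hα : 0 ≤ α)
    (hFG : F ≤ G)
    (hsp : ∀ u ∈ U, ∀ v ∈ U, ∀ r : G.Walk u v,
      ∃ q : H'.Walk u v, walkWeight w q ≤ α * walkWeight w r)
    (hF : ∀ r ∈ U, ∀ v (p : G.Walk r v),
      ∃ c ∈ U, ∃ q : F.Walk c v, walkWeight w q ≤ walkWeight w p)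
    {b t : V} (hb : b ∈ U) (p : G.Walk b t) :
    ∃ q : (H' ⊔ T ⊔ F).Walk b t, walkWeight w q ≤ (2 * α + 1) * walkWeight w p := by
  obtain ⟨c, hc, qF, hqF⟩ := hF b hb t p
  obtain ⟨qH, hqH⟩ := hsp b hb c hc (p.append (qF.mapLe hFG).reverse)
  refine ⟨(qH.mapLe (le_sup_left.trans le_sup_left)).append (qF.mapLe le_sup_right), ?_⟩
  simp only [walkWeight_append, walkWeight_mapLe, walkWeight_reverse hsymm] at hqH ⊢
  nlinarith

lemma exists_walk_via_tree (hsymm : ∀ u v, w u v = w v u)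
    (hT : ∀ v (p : G.Walk s v), ∃ q : T.Walk s v, walkWeight w q ≤ walkWeight w p)
    {b t : V} (p₁ : G.Walk s b) (p : G.Walk s t) :
    ∃ q : T.Walk b t, walkWeight w q ≤ walkWeight w p₁ + walkWeight w p := by
  obtain ⟨qb, hqb⟩ := hT b p₁
  obtain ⟨qt, hqt⟩ := hT t p
  exact ⟨qb.reverse.append qt, by rw [walkWeight_append, walkWeight_reverse hsymm]; linarith⟩

lemma exists_walk_tail_le (hw : ∀ u v, 0 ≤ w u v) (hsymm : ∀ u v, w u v = w v u)
    (hα : 1 ≤ α) (hFG : F ≤ G)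
    (hsp : ∀ u ∈ U, ∀ v ∈ U, ∀ r : G.Walk u v,
      ∃ q : H'.Walk u v, walkWeight w q ≤ α * walkWeight w r)
    (hT : ∀ v (p : G.Walk s v), ∃ q : T.Walk s v, walkWeight w q ≤ walkWeight w p)
    (hF : ∀ r ∈ U, ∀ v (p : G.Walk r v),
      ∃ c ∈ U, ∃ q : F.Walk c v, walkWeight w q ≤ walkWeight w p)
    {a b t : V} (hb : b ∈ U) (p₁ : G.Walk s a) (p₂ : G.Walk a b) (p₃ : G.Walk b t) :
    ∃ q : (H' ⊔ T ⊔ F).Walk b t,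
      walkWeight w p₁ + α * walkWeight w p₂ + walkWeight w q ≤
        (α + 1) * (walkWeight w p₁ + walkWeight w p₂ + walkWeight w p₃) := by
  have hD₁ := walkWeight_nonneg hw p₁
  rcases le_total (α * walkWeight w p₃) (α * walkWeight w p₁ + walkWeight w p₂) with h | h
  · obtain ⟨q, hq⟩ :=
      exists_walk_via_spanner_forest (T := T) hsymm (by linarith) hFG hsp hF hb p₃
    exact ⟨q, by nlinarith⟩
  · obtain ⟨q, hq⟩ :=
      exists_walk_via_tree hsymm hT (p₁.append p₂) (p₁.append (p₂.append p₃))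
    refine ⟨q.mapLe (le_sup_right.trans le_sup_left), ?_⟩
    simp only [walkWeight_append, walkWeight_mapLe] at hq ⊢
    nlinarith [mul_nonneg (sub_nonneg.mpr hα) hD₁]

theorem exists_groupSteiner_walk_le {k : ℕ} {R : Fin k → Set V} (hw : ∀ u v, 0 ≤ w u v)
    (hsymm : ∀ u v, w u v = w v u) (hα : 1 ≤ α) (hFG : F ≤ G)
    (hsp : ∀ u ∈ ⋃ i, R i, ∀ v ∈ ⋃ i, R i, ∀ r : G.Walk u v,
      ∃ q : H'.Walk u v, walkWeight w q ≤ α * walkWeight w r)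
    (hT : ∀ v (p : G.Walk s v), ∃ q : T.Walk s v, walkWeight w q ≤ walkWeight w p)
    (hF : ∀ r ∈ ⋃ i, R i, ∀ v (p : G.Walk r v),
      ∃ c ∈ ⋃ i, R i, ∃ q : F.Walk c v, walkWeight w q ≤ walkWeight w p)
    {t : V} (p : G.Walk s t) (hp : IsGroupSteiner R p) :
    ∃ q : (H' ⊔ T ⊔ F).Walk s t,
      IsGroupSteiner R q ∧ walkWeight w q ≤ (α + 1) * walkWeight w p := by
  have hH'H : H' ≤ H' ⊔ T ⊔ F := le_sup_left.trans le_sup_left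
  have hTH : T ≤ H' ⊔ T ⊔ F := le_sup_right.trans le_sup_left
  by_cases hU : ∃ y ∈ p.support, y ∈ ⋃ i, R i
  · obtain ⟨a, ha, b, hb, p₁, p₂, p₃, rfl, hp₂⟩ := p.exists_eq_append_append _ hU
    obtain ⟨qa, hqa⟩ := hT a p₁
    obtain ⟨qm, hqm, hqm_supp⟩ := exists_walk_mem_support_of_spanner hsp p₂ hb ha nil
    obtain ⟨rest, hrest⟩ := exists_walk_tail_le hw hsymm hα hFG hsp hT hF hb p₁ p₂ p₃
    refine ⟨(qa.mapLe hTH).append ((qm.mapLe hH'H).append rest),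
      hp.of_forall_mem_support fun y hy hyU => ?_, ?_⟩
    · simp [hqm_supp y (hp₂ y hy hyU) hyU]
    · simp only [walkWeight_append, walkWeight_mapLe, walkWeight_nil] at hqm ⊢
      linarith
  · obtain ⟨q, hq⟩ := hT t p
    refine ⟨q.mapLe hTH,
      hp.of_forall_mem_support fun y hy hyU => (hU ⟨y, hy, hyU⟩).elim, ?_⟩
    rw [walkWeight_mapLe]
    nlinarith [walkWeight_nonneg hw p]

end StretchBound

theorem stmt_16_general {V : Type*} [Fintype V] (G : SimpleGraph V)
    (w : V → V → ℝ) (hw : ∀ u v, 0 ≤ w u v) (hsymm : ∀ u v, w u v = w v u)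
    {k : ℕ} (R : Fin k → Set V)
    (α : ℝ) (hα : 1 ≤ α)
    (s : V)
    (H' : SimpleGraph V) (hH' : H' ≤ G)
    (hsp : ∀ u ∈ ⋃ i, R i, ∀ v ∈ ⋃ i, R i,
      spDist H' w u v ≤ ENNReal.ofReal α * spDist G w u v) :
    ∃ H : SimpleGraph V, H ≤ G ∧
      H.edgeSet.ncard ≤ 2 * Fintype.card V + H'.edgeSet.ncard ∧
      ∀ t : V, gsDist H w R s t ≤ ENNReal.ofReal (α + 1) * gsDist G w R s t := by
  obtain ⟨T, hTG, hTcard, hT⟩ := exists_shortestPathForest (G := G) hw {s}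
  obtain ⟨F, hFG, hFcard, hF⟩ := exists_shortestPathForest (G := G) hw (⋃ i, R i)
  have hT' : ∀ v (p : G.Walk s v), ∃ q : T.Walk s v, walkWeight w q ≤ walkWeight w p := by
    intro v p
    obtain ⟨c, rfl, q, hq⟩ := hT s rfl v p
    exact ⟨q, hq⟩
  have hsp' := fun u hu v hv =>
    exists_walkWeight_le_mul_of_spDist_le hw (by linarith) (hsp u hu v hv)
  refine ⟨H' ⊔ T ⊔ F, sup_le (sup_le hH' hTG) hFG, ?_, fun t =>
    gsDist_le_mul_of_forall (by linarith) fun p hp =>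
      exists_groupSteiner_walk_le hw hsymm hα hFG hsp' hT' hF p hp⟩
  rw [edgeSet_sup, edgeSet_sup, ← Nat.card_eq_fintype_card]
  have := (Set.ncard_union_le (H'.edgeSet ∪ T.edgeSet) F.edgeSet).trans
    (Nat.add_le_add_right (Set.ncard_union_le H'.edgeSet T.edgeSet) _)
  omega

/-- From a subsetwise `R × R` `α`-spanner `H'`, with `R = R_1 ∪ ⋯ ∪ R_k`,
one obtains, for every source `s`, a single-source group Steiner spanner with stretch
`α+1` having at most `2n` edges plus the edges of `H'`. -/
theorem stmt_16 {V : Type*} [Fintype V] (G : SimpleGraph V) (hconn : G.Connected)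
    (w : V → V → ℝ) (hw : ∀ u v, 0 ≤ w u v) (hsymm : ∀ u v, w u v = w v u)
    {k : ℕ} (R : Fin k → Set V) (hR : ∀ i, (R i).Nonempty)
    (α : ℝ) (hα : 1 ≤ α)
    (s : V)
    (H' : SimpleGraph V) (hH' : H' ≤ G)
    (hsp : ∀ u ∈ ⋃ i, R i, ∀ v ∈ ⋃ i, R i,
      spDist H' w u v ≤ ENNReal.ofReal α * spDist G w u v) :
    ∃ H : SimpleGraph V, H ≤ G ∧
      H.edgeSet.ncard ≤ 2 * Fintype.card V + H'.edgeSet.ncard ∧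
      ∀ t : V, gsDist H w R s t ≤ ENNReal.ofReal (α + 1) * gsDist G w R s t :=
  stmt_16_general G w hw hsymm R α hα s H' hH' hsp
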